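/- Let G(V) be an ADMG and S ⊆ V. If σ is any valid fixing sequence in G consisting of elements of V ∖ S such that no element of V ∖ S not occurring in σ is fixable in φ_σ(G) (the fixing process is 'stuck'), then the set of random vertices remaining in φ_σ(G) equals the reachable closure ⟨S⟩ of S. In particular, the stuck set does not depend on the order in which fixable vertices were chosen. -/

import Mathlib

/-- A conditional acyclic directed mixed graph (CADMG) on vertex type `V`:
a directed edge relation `dir` with no directed cycles, a symmetric irreflexive
bidirected edge relation `bi`, and a set `rnd` of random vertices (the remaining
vertices being fixed), such that no directed edge points into a fixed vertex and
no bidirected edge is incident to a fixed vertex.  An ADMG is the special case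
`rnd = Set.univ`. -/
structure CADMG (V : Type*) where
  dir : V → V → Prop
  bi : V → V → Prop
  rnd : Set V
  acyclic : ∀ v, ¬ Relation.TransGen dir v v
  bi_symm : ∀ a b, bi a b → bi b a
  bi_irrefl : ∀ a, ¬ bi a a
  dir_rnd : ∀ a b, dir a b → b ∈ rnd
  bi_rnd : ∀ a b, bi a b → a ∈ rnd ∧ b ∈ rnd

namespace CADMG

variable {V : Type*}

/-- A random vertex `r` is fixable if there is no other vertex `w` with both a
directed path from `r` to `w` and a bidirected path from `r` to `w`. -/
def Fixable (G : CADMG V) (r : V) : Prop :=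
  r ∈ G.rnd ∧
    ¬ ∃ w, w ≠ r ∧ Relation.ReflTransGen G.dir r w ∧ Relation.ReflTransGen G.bi r w

/-- The fixing operator: move `r` from the random to the fixed vertices and delete
all directed edges into `r` and all bidirected edges incident to `r`. -/
def fix (G : CADMG V) (r : V) : CADMG V where
  dir a b := G.dir a b ∧ b ≠ r
  bi a b := G.bi a b ∧ a ≠ r ∧ b ≠ r
  rnd := G.rnd \ {r}
  acyclic v h := G.acyclic v (by
    suffices key : ∀ w, Relation.TransGen (fun a b => G.dir a b ∧ b ≠ r) v w →
        Relation.TransGen G.dir v w from key v h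
    intro w hw
    induction hw with
    | single hab => exact Relation.TransGen.single hab.1
    | tail _ hab ih => exact ih.tail hab.1)
  bi_symm a b h := ⟨G.bi_symm a b h.1, h.2.2, h.2.1⟩
  bi_irrefl a h := G.bi_irrefl a h.1
  dir_rnd a b h := ⟨G.dir_rnd a b h.1, h.2⟩
  bi_rnd a b h := ⟨⟨(G.bi_rnd a b h.1).1, h.2.1⟩, (G.bi_rnd a b h.1).2, h.2.2⟩

/-- A sequence of vertices is a valid fixing sequence if it is empty, or its head is
fixable and its tail is valid in the graph obtained by fixing the head. -/
def Valid (G : CADMG V) : List V → Prop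
  | [] => True
  | r :: rest => G.Fixable r ∧ (G.fix r).Valid rest

/-- `φ_σ(G)`: the CADMG obtained by applying the fixing operators along the list `σ`. -/
def fixList (G : CADMG V) : List V → CADMG V
  | [] => G
  | r :: rest => (G.fix r).fixList rest

/-- A set `R` of random vertices is reachable if some ordering of the remaining random
vertices is a valid fixing sequence. -/
def Reachable (G : CADMG V) (R : Set V) : Prop :=
  ∃ σ : List V, G.Valid σ ∧ ∀ v, v ∈ σ ↔ v ∈ G.rnd \ R

/-- `C` is the reachable closure of `S`: the smallest reachable superset of `S`. -/
def IsReachableClosure (G : CADMG V) (S C : Set V) : Prop :=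
  G.Reachable C ∧ S ⊆ C ∧ ∀ T, G.Reachable T → S ⊆ T → C ⊆ T

/-- `D` is bidirected-connected (within `D` itself): `D` is nonempty and any two of its
elements are joined by a bidirected path staying inside `D`. -/
def BiConnected (G : CADMG V) (D : Set V) : Prop :=
  D.Nonempty ∧ ∀ a ∈ D, ∀ b ∈ D,
    Relation.ReflTransGen (fun x y => G.bi x y ∧ x ∈ D ∧ y ∈ D) a b

/-- An intrinsic set: reachable and bidirected-connected. -/
def Intrinsic (G : CADMG V) (R : Set V) : Prop :=
  G.Reachable R ∧ G.BiConnected R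

/-- The induced subgraph on a set `W` of vertices (vertices outside `W` become fixed
and lose all their edges). -/
def induce (G : CADMG V) (W : Set V) : CADMG V where
  dir a b := G.dir a b ∧ a ∈ W ∧ b ∈ W
  bi a b := G.bi a b ∧ a ∈ W ∧ b ∈ W
  rnd := G.rnd ∩ W
  acyclic v h := G.acyclic v (by
    suffices key : ∀ w, Relation.TransGen (fun a b => G.dir a b ∧ a ∈ W ∧ b ∈ W) v w →
        Relation.TransGen G.dir v w from key v h
    intro w hw
    induction hw with
    | single hab => exact Relation.TransGen.single hab.1
    | tail _ hab ih => exact ih.tail hab.1)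
  bi_symm a b h := ⟨G.bi_symm a b h.1, h.2.2, h.2.1⟩
  bi_irrefl a h := G.bi_irrefl a h.1
  dir_rnd a b h := ⟨G.dir_rnd a b h.1, h.2.2⟩
  bi_rnd a b h := ⟨⟨(G.bi_rnd a b h.1).1, h.2.1⟩, (G.bi_rnd a b h.1).2, h.2.2⟩

/-- The districts of a CADMG: the connected components of its random vertices under
the bidirected edge relation. -/
def District (G : CADMG V) (D : Set V) : Prop :=
  ∃ v ∈ G.rnd, D = {w | Relation.ReflTransGen G.bi v w}

/-- `Y*`: the set of vertices having a directed path (possibly of length zero) to an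
element of `Y` that does not intersect `A`. -/
def Ystar (G : CADMG V) (A Y : Set V) : Set V :=
  {v | ∃ y ∈ Y, Relation.ReflTransGen (fun a b => G.dir a b ∧ a ∉ A ∧ b ∉ A) v y}

/-- `F` is an `R`-rooted C-forest: `R ⊆ F`, `F` is bidirected-connected in the induced
subgraph `G_F`, and there is a subgraph of `G_F` with vertex set `F` and a subset `E` of
its directed edges in which every element of `F` has a directed path (possibly of
length zero) to an element of `R`. -/
def CForest (G : CADMG V) (R F : Set V) : Prop :=
  R ⊆ F ∧ G.BiConnected F ∧
    ∃ E : V → V → Prop,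
      (∀ a b, E a b → G.dir a b ∧ a ∈ F ∧ b ∈ F) ∧
      ∀ f ∈ F, ∃ r ∈ R, Relation.ReflTransGen E f r

/-- A hedge for `(Y, A)` in `G`: a pair `(F, F')` of `R`-rooted C-forests, for some common
root set `R`, with `F ⊊ F'`, `F ∩ A = ∅`, `A ∩ (F' \ F) ≠ ∅`, and every element of `R`
has a directed path to an element of `Y` that does not intersect `A`. -/
def Hedge (G : CADMG V) (Y A : Set V) : Prop :=
  ∃ R F F', G.CForest R F ∧ G.CForest R F' ∧ F ⊂ F' ∧ F ∩ A = ∅ ∧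
    (A ∩ (F' \ F)).Nonempty ∧
    ∀ r ∈ R, ∃ y ∈ Y, Relation.ReflTransGen (fun a b => G.dir a b ∧ a ∉ A ∧ b ∉ A) r y

end CADMG

/-!
Fixing only deletes edges and random vertices, and a vertex is fixable when certain paths are
absent, so a vertex fixable in a CADMG stays fixable in every subgraph in which it is still random.
Hence a valid fixing sequence of `G` restricts to a valid fixing sequence of any subgraph. If some
`T ⊇ S` were reachable without containing the stuck set `φ_σ(G).rnd`, restricting a fixing
sequence for `T` to `φ_σ(G)` would give a nonempty valid sequence there, whose head is a fixable
vertex outside `S` and `σ`: impossible.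
-/

namespace CADMG

variable {V : Type*}

instance : Preorder (CADMG V) where
  le G' G := (∀ a b, G'.dir a b → G.dir a b) ∧ (∀ a b, G'.bi a b → G.bi a b) ∧ G'.rnd ⊆ G.rnd
  le_refl _ := ⟨fun _ _ h => h, fun _ _ h => h, subset_rfl⟩
  le_trans _ _ _ h₁ h₂ := ⟨fun a b h => h₂.1 a b (h₁.1 a b h),
    fun a b h => h₂.2.1 a b (h₁.2.1 a b h), h₁.2.2.trans h₂.2.2⟩

theorem Fixable.of_le {G' G : CADMG V} (h : G' ≤ G) {r : V} (hf : G.Fixable r)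
    (hr : r ∈ G'.rnd) : G'.Fixable r :=
  ⟨hr, fun ⟨w, hw, hd, hb⟩ =>
    hf.2 ⟨w, hw, Relation.ReflTransGen.mono h.1 _ _ hd, Relation.ReflTransGen.mono h.2.1 _ _ hb⟩⟩

theorem fix_le (G : CADMG V) (r : V) : G.fix r ≤ G :=
  ⟨fun _ _ h => h.1, fun _ _ h => h.1, fun _ h => h.1⟩

theorem fix_le_fix {G' G : CADMG V} (h : G' ≤ G) (r : V) : G'.fix r ≤ G.fix r :=
  ⟨fun a b hab => ⟨h.1 a b hab.1, hab.2⟩, fun a b hab => ⟨h.2.1 a b hab.1, hab.2⟩,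
    fun _ hx => ⟨h.2.2 hx.1, hx.2⟩⟩

theorem le_fix_of_notMem_rnd {G' G : CADMG V} (h : G' ≤ G) {r : V} (hr : r ∉ G'.rnd) :
    G' ≤ G.fix r :=
  ⟨fun a b hab => ⟨h.1 a b hab, fun hb => hr (hb ▸ G'.dir_rnd a b hab)⟩,
    fun a b hab => ⟨h.2.1 a b hab, fun ha => hr (ha ▸ (G'.bi_rnd a b hab).1),
      fun hb => hr (hb ▸ (G'.bi_rnd a b hab).2)⟩,
    fun _ hx => ⟨h.2.2 hx, fun hxr => hr (hxr ▸ hx)⟩⟩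

theorem fixList_le (G : CADMG V) : ∀ σ : List V, G.fixList σ ≤ G
  | [] => le_rfl
  | r :: σ => ((G.fix r).fixList_le σ).trans (G.fix_le r)

theorem rnd_fixList (G : CADMG V) : ∀ σ : List V, (G.fixList σ).rnd = G.rnd \ {x | x ∈ σ}
  | [] => by simp [fixList]
  | r :: σ => by
    rw [fixList, rnd_fixList, fix, Set.sdiff_sdiff]
    congr 1
    ext x
    simp

theorem Valid.mem_rnd : ∀ {G : CADMG V} {σ : List V}, G.Valid σ → ∀ x ∈ σ, x ∈ G.rnd
  | _, [], _, _, hx => absurd hx List.not_mem_nil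
  | _, _ :: _, hv, x, hx => by
    rcases List.mem_cons.1 hx with rfl | hx
    · exact hv.1.1
    · exact (hv.2.mem_rnd x hx).1

theorem Valid.restrict : ∀ {G G' : CADMG V} {σ : List V}, G' ≤ G → G.Valid σ →
    ∃ σ', G'.Valid σ' ∧ ∀ x, x ∈ σ' ↔ x ∈ σ ∧ x ∈ G'.rnd
  | _, _, [], _, _ => ⟨[], trivial, by simp⟩
  | G, G', r :: σ, hle, ⟨hfix, hvalid⟩ => by
    have hrσ : r ∉ σ := fun h => (hvalid.mem_rnd r h).2 rfl
    by_cases hr : r ∈ G'.rnd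
    · obtain ⟨σ', hvalid', hmem⟩ := hvalid.restrict (fix_le_fix hle r)
      refine ⟨r :: σ', ⟨hfix.of_le hle hr, hvalid'⟩, fun x => ?_⟩
      simp only [List.mem_cons, hmem, fix, Set.mem_sdiff, Set.mem_singleton_iff]
      grind
    · obtain ⟨σ', hvalid', hmem⟩ := hvalid.restrict (le_fix_of_notMem_rnd hle hr)
      refine ⟨σ', hvalid', fun x => ?_⟩
      simp only [hmem, List.mem_cons]
      grind

theorem Valid.reachable_rnd_fixList {G : CADMG V} {σ : List V} (hσ : G.Valid σ) :
    G.Reachable (G.fixList σ).rnd :=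
  ⟨σ, hσ, fun v => by
    rw [rnd_fixList]
    simpa using hσ.mem_rnd v⟩

theorem Reachable.exists_fixable_notMem {G G' : CADMG V} {T : Set V} (hT : G.Reachable T)
    (hle : G' ≤ G) {v : V} (hv : v ∈ G'.rnd) (hvT : v ∉ T) :
    ∃ w ∉ T, G'.Fixable w := by
  obtain ⟨τ, hτ, hτmem⟩ := hT
  obtain ⟨τ', hτ', hτ'mem⟩ := hτ.restrict hle
  have hvτ' : v ∈ τ' := (hτ'mem v).2 ⟨(hτmem v).2 ⟨hle.2.2 hv, hvT⟩, hv⟩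
  cases τ' with
  | nil => exact absurd hvτ' List.not_mem_nil
  | cons w _ =>
    have hwτ := ((hτ'mem w).1 List.mem_cons_self).1
    exact ⟨w, ((hτmem w).1 hwτ).2, hτ'.1⟩

end CADMG

theorem stuck_set_eq_reachable_closure_general
    {V : Type*} (G : CADMG V) (hG : G.rnd = Set.univ) (S : Set V)
    (σ : List V) (hσ : G.Valid σ) (hσS : ∀ v ∈ σ, v ∉ S)
    (hstuck : ∀ v, v ∉ S → v ∉ σ → ¬ (G.fixList σ).Fixable v) :
    G.IsReachableClosure S (G.fixList σ).rnd := by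
  refine ⟨hσ.reachable_rnd_fixList, fun v hv => ?_, fun T hT hST v hv => ?_⟩
  · rw [CADMG.rnd_fixList, hG]
    exact ⟨trivial, fun hvσ => hσS v hvσ hv⟩
  · by_contra hvT
    obtain ⟨w, hwT, hw⟩ := hT.exists_fixable_notMem (G.fixList_le σ) hv hvT
    have hwσ : w ∈ G.rnd \ {x | x ∈ σ} := CADMG.rnd_fixList G σ ▸ hw.1
    exact hstuck w (fun hwS => hwT (hST hwS)) hwσ.2 hw

/-- If the fixing process for `V ∖ S` gets stuck after a valid sequence `σ`
(no remaining element of `V ∖ S` is fixable in `φ_σ(G)`), then the set of random vertices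
remaining in `φ_σ(G)` is exactly the reachable closure `⟨S⟩` of `S`; in particular it does
not depend on the order in which fixable vertices were chosen. -/
theorem stuck_set_eq_reachable_closure
    {V : Type*} [Fintype V] (G : CADMG V) (hG : G.rnd = Set.univ) (S : Set V)
    (σ : List V) (hσ : G.Valid σ) (hσS : ∀ v ∈ σ, v ∉ S)
    (hstuck : ∀ v, v ∉ S → v ∉ σ → ¬ (G.fixList σ).Fixable v) :
    G.IsReachableClosure S (G.fixList σ).rnd :=
  stuck_set_eq_reachable_closure_general G hG S σ hσ hσS hstuck
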